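/- Let d ≥ 2, N ≥ 2 and 2 ≤ L ≤ N be integers. Let v be a real vector indexed by the bit strings y ∈ {0,1}^N of Hamming weight L, and suppose that for every bit string x ∈ {0,1}^N of Hamming weight 2, Σ_{y : x·y = 2} v_y = 0. Then Σ_{y : |y| = L} v_y · G_y^{(1)} = 0 (the zero matrix). -/
import Mathlib


/-- Hamming weight of a bit string. -/
def wt {N : ℕ} (x : Fin N → Bool) : ℕ := (Finset.univ.filter (fun i => x i = true)).card

/-- Number of positions at which both bit strings are 1. -/
def dotB {N : ℕ} (x z : Fin N → Bool) : ℕ :=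
  (Finset.univ.filter (fun i => x i = true ∧ z i = true)).card

/-- The (x,z) entry of the matrix `G_y^{(M)}`:
`1 / C(M + d − 1 − x·z + |x̄ ∧ z̄ ∧ y|, d − 1)`. -/
noncomputable def gEnt (d M : ℕ) {N : ℕ} (y x z : Fin N → Bool) : ℝ :=
  1 / (Nat.choose (M + d - 1 - dotB x z + wt (fun i => (!x i && !z i && y i))) (d - 1) : ℝ)

/-- The matrix `G_y^{(1)}` as an `N × N` real matrix, after identifying weight-1
index strings with the position of their single 1. -/
noncomputable def gMat1 (d : ℕ) {N : ℕ} (y : Fin N → Bool) : Matrix (Fin N) (Fin N) ℝ :=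
  Matrix.of fun n m => gEnt d 1 y (fun i => decide (i = n)) (fun i => decide (i = m))

/-- The matrix `G_y^{(1,L)} = Σ_{x : |x| = L, x·y = min(L,|y|)} G_x^{(1)}`. -/
noncomputable def gMat1L (d L : ℕ) {N : ℕ} (y : Fin N → Bool) : Matrix (Fin N) (Fin N) ℝ :=
  ∑ x ∈ Finset.univ.filter (fun x : Fin N → Bool => wt x = L ∧ dotB x y = min L (wt y)),
    gMat1 d x

open Finset


variable {N : ℕ}

lemma wt_eq_sum (y : Fin N → Bool) :
    wt y = ∑ i : Fin N, if y i = true then 1 else 0 := Finset.card_filter _ _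

lemma ite_eq_sum (n : Fin N) (f : Fin N → ℕ) :
    f n = ∑ i : Fin N, if i = n then f i else 0 := by
  rw [Finset.sum_ite_eq' Finset.univ n f]; simp

lemma wt_compl_one (y : Fin N → Bool) (n : Fin N) :
    wt (fun i => (!decide (i = n) && !decide (i = n) && y i))
      + (if y n = true then 1 else 0) = wt y := by
  rw [wt_eq_sum, wt_eq_sum,
    ite_eq_sum n (fun i => if y i = true then 1 else 0), ← Finset.sum_add_distrib]
  refine Finset.sum_congr rfl fun i _ => ?_
  by_cases h : i = n <;> simp [h]

lemma wt_compl_two (y : Fin N → Bool) (n m : Fin N) (hnm : n ≠ m) :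
    wt (fun i => (!decide (i = n) && !decide (i = m) && y i))
      + ((if y n = true then 1 else 0) + (if y m = true then 1 else 0)) = wt y := by
  rw [wt_eq_sum, wt_eq_sum,
    ite_eq_sum n (fun i => if y i = true then 1 else 0),
    ite_eq_sum m (fun i => if y i = true then 1 else 0),
    ← Finset.sum_add_distrib, ← Finset.sum_add_distrib]
  refine Finset.sum_congr rfl fun i _ => ?_
  by_cases h : i = n <;> by_cases h' : i = m
  · exact absurd (h ▸ h') hnm
  · simp [h, h', hnm, Ne.symm hnm]
  · simp [h, h', hnm, Ne.symm hnm]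
  · simp [h, h', hnm, Ne.symm hnm]

lemma dotB_ind (n m : Fin N) :
    dotB (fun i => decide (i = n)) (fun i => decide (i = m))
      = if n = m then 1 else 0 := by
  unfold dotB
  by_cases h : n = m
  · subst h; simp [Finset.filter_eq']
  · rw [if_neg h]
    rw [Finset.card_eq_zero]
    ext i
    simp only [mem_filter, mem_univ, true_and, decide_eq_true_eq, notMem_empty, iff_false]
    rintro ⟨rfl, rfl⟩
    exact h rfl

lemma wt_pair (n m : Fin N) (hnm : n ≠ m) :
    wt (fun i => decide (i = n ∨ i = m)) = 2 := by
  unfold wt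
  have : (univ.filter fun i => decide (i = n ∨ i = m) = true) = {n, m} := by
    ext i; simp
  rw [this, Finset.card_insert_of_notMem (by simp [hnm]), Finset.card_singleton]

lemma dotB_pair (n m : Fin N) (hnm : n ≠ m) (y : Fin N → Bool) :
    dotB (fun i => decide (i = n ∨ i = m)) y
      = (if y n = true then 1 else 0) + (if y m = true then 1 else 0) := by
  unfold dotB
  rw [Finset.card_filter,
    ite_eq_sum n (fun i => if y i = true then 1 else 0),
    ite_eq_sum m (fun i => if y i = true then 1 else 0),
    ← Finset.sum_add_distrib]
  refine Finset.sum_congr rfl fun i _ => ?_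
  by_cases h : i = n <;> by_cases h' : i = m
  · exact absurd (h ▸ h') hnm
  · simp [h, h', hnm, Ne.symm hnm]
  · simp [h, h', hnm, Ne.symm hnm]
  · simp [h, h', hnm, Ne.symm hnm]

section main

variable {N : ℕ} (L : ℕ) (v : (Fin N → Bool) → ℝ)
  (hker : ∀ x : Fin N → Bool, wt x = 2 →
      ∑ y ∈ Finset.univ.filter (fun y : Fin N → Bool => wt y = L ∧ dotB x y = 2), v y = 0)

include hker

lemma sumA (n m : Fin N) (hnm : n ≠ m) :
    ∑ y ∈ univ.filter (fun y : Fin N → Bool => wt y = L ∧ y n = true ∧ y m = true), v y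
      = 0 := by
  have h := hker (fun i => decide (i = n ∨ i = m)) (wt_pair n m hnm)
  have hset : univ.filter
        (fun y : Fin N → Bool => wt y = L ∧ dotB (fun i => decide (i = n ∨ i = m)) y = 2)
      = univ.filter (fun y : Fin N → Bool => wt y = L ∧ y n = true ∧ y m = true) := by
    ext y
    simp only [mem_filter, mem_univ, true_and, and_congr_right_iff]
    intro _
    rw [dotB_pair n m hnm y]
    cases hn : y n <;> cases hm : y m <;> simp
  rw [hset] at h
  exact h

lemma sumB (hL : 2 ≤ L) (n : Fin N) :
    ∑ y ∈ univ.filter (fun y : Fin N → Bool => wt y = L ∧ y n = true), v y = 0 := by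
  set A := univ.filter (fun y : Fin N → Bool => wt y = L ∧ y n = true) with hAdef
  have hT : ∑ m ∈ univ.erase n, ∑ y ∈ univ.filter
      (fun y : Fin N → Bool => wt y = L ∧ y n = true ∧ y m = true), v y = 0 :=
    Finset.sum_eq_zero fun m hm =>
      sumA L v hker n m (Ne.symm (Finset.ne_of_mem_erase hm))
  have hsplit : ∀ m : Fin N,
      ∑ y ∈ univ.filter (fun y : Fin N → Bool => wt y = L ∧ y n = true ∧ y m = true), v y
        = ∑ y ∈ A, if y m = true then v y else 0 := by
    intro m
    rw [hAdef, ← Finset.sum_filter, Finset.filter_filter]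
    exact Finset.sum_congr (by ext y; simp [and_assoc]) fun _ _ => rfl
  rw [Finset.sum_congr rfl (fun m _ => hsplit m), Finset.sum_comm] at hT
  have hcard : ∀ y ∈ A, ∑ m ∈ univ.erase n, (if y m = true then v y else 0)
      = ((L : ℝ) - 1) * v y := by
    intro y hy
    rw [hAdef, mem_filter] at hy
    obtain ⟨-, hwt, hyn⟩ := hy
    rw [← Finset.sum_filter, Finset.sum_const, Finset.filter_erase,
      Finset.card_erase_of_mem (by simp [hyn])]
    have : (univ.filter fun m => y m = true).card = L := hwt
    rw [this, nsmul_eq_mul, Nat.cast_sub (by omega), Nat.cast_one]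
  rw [Finset.sum_congr rfl hcard, ← Finset.mul_sum] at hT
  rcases mul_eq_zero.mp hT with h | h
  · exfalso
    have : (2:ℝ) ≤ (L:ℝ) := by exact_mod_cast hL
    linarith
  · exact h

lemma sumC (hL : 2 ≤ L) :
    ∑ y ∈ univ.filter (fun y : Fin N → Bool => wt y = L), v y = 0 := by
  set A := univ.filter (fun y : Fin N → Bool => wt y = L) with hAdef
  have hT : ∑ n : Fin N, ∑ y ∈ univ.filter
      (fun y : Fin N → Bool => wt y = L ∧ y n = true), v y = 0 :=
    Finset.sum_eq_zero fun n _ => sumB L v hker hL n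
  have hsplit : ∀ n : Fin N,
      ∑ y ∈ univ.filter (fun y : Fin N → Bool => wt y = L ∧ y n = true), v y
        = ∑ y ∈ A, if y n = true then v y else 0 := by
    intro n
    rw [hAdef, ← Finset.sum_filter, Finset.filter_filter]
  rw [Finset.sum_congr rfl (fun n _ => hsplit n), Finset.sum_comm] at hT
  have hcard : ∀ y ∈ A, ∑ n : Fin N, (if y n = true then v y else 0)
      = (L : ℝ) * v y := by
    intro y hy
    rw [hAdef, mem_filter] at hy
    obtain ⟨-, hwt⟩ := hy
    rw [← Finset.sum_filter, Finset.sum_const]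
    have : (univ.filter fun m => y m = true).card = L := hwt
    rw [this, nsmul_eq_mul]
  rw [Finset.sum_congr rfl hcard, ← Finset.mul_sum] at hT
  rcases mul_eq_zero.mp hT with h | h
  · exfalso
    have : (2:ℝ) ≤ (L:ℝ) := by exact_mod_cast hL
    linarith
  · exact h

end main

lemma sum_mul_eq_zero {α : Type*} (s : Finset α) (v f : α → ℝ) (c : ℝ)
    (h0 : ∑ y ∈ s, v y = 0) (hc : ∀ y ∈ s, f y = c) :
    ∑ y ∈ s, v y * f y = 0 := by
  calc ∑ y ∈ s, v y * f y = ∑ y ∈ s, v y * c :=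
        Finset.sum_congr rfl (fun y hy => by rw [hc y hy])
    _ = (∑ y ∈ s, v y) * c := by rw [Finset.sum_mul]
    _ = 0 := by rw [h0, zero_mul]

/-- Any vector `v` on the weight-`L` strings in the kernel of the intersection matrix `X`
(rows indexed by weight-2 strings, entry 1 iff `x·y = 2`) satisfies
`Σ_y v_y G_y^{(1)} = 0`. -/
theorem kernel_relation_M1 (N d L : ℕ) (hd : 2 ≤ d) (hN : 2 ≤ N) (hL : 2 ≤ L) (hLN : L ≤ N)
    (v : (Fin N → Bool) → ℝ)
    (hker : ∀ x : Fin N → Bool, wt x = 2 →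
      ∑ y ∈ Finset.univ.filter (fun y : Fin N → Bool => wt y = L ∧ dotB x y = 2), v y = 0) :
    ∑ y ∈ Finset.univ.filter (fun y : Fin N → Bool => wt y = L), v y • gMat1 d y = 0 := by
  classical
  set F := Finset.univ.filter (fun y : Fin N → Bool => wt y = L) with hF
  -- basic zero-sum facts
  have hS : ∑ y ∈ F, v y = 0 := sumC L v hker hL
  have hS1 : ∀ n : Fin N, ∑ y ∈ F.filter (fun y => y n = true), v y = 0 := by
    intro n
    rw [hF, Finset.filter_filter]
    exact sumB L v hker hL n
  have hS0 : ∀ n : Fin N, ∑ y ∈ F.filter (fun y => ¬ y n = true), v y = 0 := by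
    intro n
    have h := Finset.sum_filter_add_sum_filter_not F (fun y => y n = true) v
    have := hS1 n
    linarith
  ext n m
  simp only [Matrix.sum_apply, Matrix.smul_apply, smul_eq_mul, Matrix.zero_apply]
  by_cases hnm : n = m
  · -- diagonal case
    subst hnm
    have hval1 : ∀ y ∈ F.filter (fun y => y n = true),
        gMat1 d y n n = 1 / (Nat.choose (d - 1 + (L - 1)) (d - 1) : ℝ) := by
      intro y hy
      rw [Finset.mem_filter, hF, Finset.mem_filter] at hy
      obtain ⟨⟨-, hwt⟩, hyn⟩ := hy
      have hw := wt_compl_one y n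
      rw [hyn, if_pos rfl, hwt] at hw
      simp only [gMat1, Matrix.of_apply, gEnt]
      have harg : 1 + d - 1 - dotB (fun i => decide (i = n)) (fun i => decide (i = n))
          + wt (fun i => (!decide (i = n) && !decide (i = n) && y i))
          = d - 1 + (L - 1) := by
        rw [dotB_ind, if_pos rfl]; omega
      rw [harg]
    have hval0 : ∀ y ∈ F.filter (fun y => ¬ y n = true),
        gMat1 d y n n = 1 / (Nat.choose (d - 1 + L) (d - 1) : ℝ) := by
      intro y hy
      rw [Finset.mem_filter, hF, Finset.mem_filter] at hy
      obtain ⟨⟨-, hwt⟩, hyn⟩ := hy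
      rw [Bool.not_eq_true] at hyn
      have hw := wt_compl_one y n
      rw [hyn, if_neg (by simp), hwt] at hw
      simp only [gMat1, Matrix.of_apply, gEnt]
      have harg : 1 + d - 1 - dotB (fun i => decide (i = n)) (fun i => decide (i = n))
          + wt (fun i => (!decide (i = n) && !decide (i = n) && y i))
          = d - 1 + L := by
        rw [dotB_ind, if_pos rfl]; omega
      rw [harg]
    rw [← Finset.sum_filter_add_sum_filter_not F (fun y => y n = true)
      (fun y => v y * gMat1 d y n n)]
    rw [sum_mul_eq_zero _ v _ _ (hS1 n) hval1,
      sum_mul_eq_zero _ v _ _ (hS0 n) hval0, add_zero]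
  · -- off-diagonal case
    -- the four zero-sum facts
    have hZ11 : ∑ y ∈ (F.filter (fun y => y n = true)).filter (fun y => y m = true),
        v y = 0 := by
      rw [Finset.filter_filter, hF, Finset.filter_filter]
      exact sumA L v hker n m hnm
    have hZ10 : ∑ y ∈ (F.filter (fun y => y n = true)).filter (fun y => ¬ y m = true),
        v y = 0 := by
      have h := Finset.sum_filter_add_sum_filter_not (F.filter (fun y => y n = true))
        (fun y => y m = true) v
      have := hS1 n
      linarith
    have hZ01 : ∑ y ∈ (F.filter (fun y => ¬ y n = true)).filter (fun y => y m = true),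
        v y = 0 := by
      have h := Finset.sum_filter_add_sum_filter_not (F.filter (fun y => y m = true))
        (fun y => y n = true) v
      have h2 : ∑ y ∈ (F.filter (fun y => y m = true)).filter (fun y => y n = true),
          v y = 0 := by
        rw [← hZ11]
        exact Finset.sum_congr (by ext y; simp; tauto) fun _ _ => rfl
      have h3 : ∑ y ∈ (F.filter (fun y => y m = true)).filter (fun y => ¬ y n = true),
          v y = ∑ y ∈ (F.filter (fun y => ¬ y n = true)).filter (fun y => y m = true),
          v y :=
        Finset.sum_congr (by ext y; simp; tauto) fun _ _ => rfl
      have := hS1 m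
      linarith
    have hZ00 : ∑ y ∈ (F.filter (fun y => ¬ y n = true)).filter (fun y => ¬ y m = true),
        v y = 0 := by
      have h := Finset.sum_filter_add_sum_filter_not (F.filter (fun y => ¬ y n = true))
        (fun y => y m = true) v
      have := hS0 n
      linarith
    -- the four constant-entry facts
    have hvalgen : ∀ (a b : ℕ) (y : Fin N → Bool), wt y = L →
        (if y n = true then 1 else 0) = a → (if y m = true then 1 else 0) = b →
        gMat1 d y n m = 1 / (Nat.choose (d + (L - (a + b))) (d - 1) : ℝ) := by
      intro a b y hwt ha hb
      have hw := wt_compl_two y n m hnm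
      rw [ha, hb, hwt] at hw
      have ha' : a ≤ 1 := by rw [← ha]; split <;> omega
      have hb' : b ≤ 1 := by rw [← hb]; split <;> omega
      simp only [gMat1, Matrix.of_apply, gEnt]
      have harg : 1 + d - 1 - dotB (fun i => decide (i = n)) (fun i => decide (i = m))
          + wt (fun i => (!decide (i = n) && !decide (i = m) && y i))
          = d + (L - (a + b)) := by
        rw [dotB_ind, if_neg hnm]; omega
      rw [harg]
    rw [← Finset.sum_filter_add_sum_filter_not F (fun y => y n = true)
        (fun y => v y * gMat1 d y n m),
      ← Finset.sum_filter_add_sum_filter_not (F.filter (fun y => y n = true))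
        (fun y => y m = true) (fun y => v y * gMat1 d y n m),
      ← Finset.sum_filter_add_sum_filter_not (F.filter (fun y => ¬ y n = true))
        (fun y => y m = true) (fun y => v y * gMat1 d y n m)]
    have hmem : ∀ (p q : (Fin N → Bool) → Prop) [DecidablePred p] [DecidablePred q],
        ∀ y ∈ (F.filter p).filter q, wt y = L ∧ p y ∧ q y := by
      intro p q _ _ y hy
      rw [Finset.mem_filter, Finset.mem_filter, hF, Finset.mem_filter] at hy
      tauto
    rw [sum_mul_eq_zero _ v _ (1 / (Nat.choose (d + (L - (1 + 1))) (d - 1) : ℝ)) hZ11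
        (fun y hy => by
          obtain ⟨hwt, h1, h2⟩ := hmem _ _ y hy
          exact hvalgen 1 1 y hwt (if_pos h1) (if_pos h2)),
      sum_mul_eq_zero _ v _ (1 / (Nat.choose (d + (L - (1 + 0))) (d - 1) : ℝ)) hZ10
        (fun y hy => by
          obtain ⟨hwt, h1, h2⟩ := hmem _ _ y hy
          exact hvalgen 1 0 y hwt (if_pos h1) (if_neg h2)),
      sum_mul_eq_zero _ v _ (1 / (Nat.choose (d + (L - (0 + 1))) (d - 1) : ℝ)) hZ01
        (fun y hy => by
          obtain ⟨hwt, h1, h2⟩ := hmem _ _ y hy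
          exact hvalgen 0 1 y hwt (if_neg h1) (if_pos h2)),
      sum_mul_eq_zero _ v _ (1 / (Nat.choose (d + (L - (0 + 0))) (d - 1) : ℝ)) hZ00
        (fun y hy => by
          obtain ⟨hwt, h1, h2⟩ := hmem _ _ y hy
          exact hvalgen 0 0 y hwt (if_neg h1) (if_neg h2))]
    ring
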